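/- Let ν > 0. The function W_B(y) = 2·Σ_{i<j} ln(y_i² - y_j²) + 2ν·Σ_i ln y_i - ‖y‖²/2 on the open chamber {y ∈ ℝ^N : y_1 > ... > y_N > 0} attains its maximum at r if and only if for all i: r_i/2 = Σ_{j≠i} (1/(r_i - r_j) + 1/(r_i + r_j)) + ν/r_i. -/

import Mathlib

/-!
In the coordinates `x_i = y_i ^ 2`, which map the chamber bijectively onto itself, `W_B` becomes
`2 ∑_{i<j} log (x_i - x_j) + ν ∑ log x_i - ∑ x_i / 2`, a concave function: the tangent-line bound
`log a ≤ log b + (a - b) / b` bounds it by its linearization at any point of the chamber. A point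
of the open chamber is therefore a maximizer iff all partial derivatives in the `x_i` vanish, and
`r_i` times the `i`-th one is the difference of the two sides of the stationarity equation.
-/

open Finset

noncomputable def WB (N : ℕ) (ν : ℝ) (y : Fin N → ℝ) : ℝ :=
  2 * ∑ i, ∑ j ∈ Finset.univ.filter (fun j => i < j), Real.log (y i ^ 2 - y j ^ 2)
    + 2 * ν * ∑ i, Real.log (y i)
    - (∑ i, (y i) ^ 2) / 2

def InChamberB (N : ℕ) (y : Fin N → ℝ) : Prop :=
  StrictAnti y ∧ ∀ i, 0 < y i

theorem Finset.sum_erase_eq_sum_lt_add_sum_gt {ι M : Type*} [Fintype ι] [LinearOrder ι]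
    [AddCommMonoid M] (i : ι) (f : ι → M) :
    ∑ j ∈ univ.erase i, f j = ∑ j ∈ univ.filter (· < i), f j + ∑ j ∈ univ.filter (i < ·), f j := by
  rw [← sum_filter_add_sum_filter_not (univ.erase i) (· < i)]
  congr 2 <;> ext j <;> simp only [mem_filter, mem_erase, mem_univ, and_true, not_lt] <;>
    grind

theorem Finset.sum_sum_lt_sub_mul {ι R : Type*} [Fintype ι] [LinearOrder ι] [CommRing R]
    (a : ι → R) (c : ι → ι → R) (hc : ∀ i j, i < j → c j i = -c i j) :
    ∑ i, ∑ j ∈ univ.filter (i < ·), (a i - a j) * c i j =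
      ∑ i, a i * ∑ j ∈ univ.erase i, c i j := by
  have hswap : ∑ i, ∑ j ∈ univ.filter (i < ·), a j * c j i =
      ∑ j, ∑ i ∈ univ.filter (· < j), a j * c j i :=
    sum_comm' fun i j => by simp
  calc ∑ i, ∑ j ∈ univ.filter (i < ·), (a i - a j) * c i j
      = ∑ i, ∑ j ∈ univ.filter (i < ·), a i * c i j
          + ∑ i, ∑ j ∈ univ.filter (i < ·), a j * c j i := by
        rw [← sum_add_distrib]
        refine sum_congr rfl fun i _ => ?_
        rw [← sum_add_distrib]
        refine sum_congr rfl fun j hj => ?_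
        rw [hc i j (mem_filter.mp hj).2]
        ring
    _ = ∑ i, a i * ∑ j ∈ univ.erase i, c i j := by
        simp only [hswap, sum_erase_eq_sum_lt_add_sum_gt, mul_add, mul_sum, ← sum_add_distrib,
          add_comm]

theorem Real.log_le_log_add_sub_div {x y : ℝ} (hx : 0 < x) (hy : 0 < y) :
    Real.log x ≤ Real.log y + (x - y) / y := by
  have h := Real.log_le_sub_one_of_pos (div_pos hx hy)
  rw [Real.log_div hx.ne' hy.ne', div_sub_one hy.ne'] at h
  linarith

theorem isOpen_setOf_inChamberB (N : ℕ) : IsOpen {y : Fin N → ℝ | InChamberB N y} := by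
  have : {y : Fin N → ℝ | InChamberB N y} =
      (⋂ i, ⋂ j, ⋂ (_ : i < j), {y | y j < y i}) ∩ ⋂ i, {y | 0 < y i} := by
    ext y; simp [InChamberB, StrictAnti]
  rw [this]
  exact .inter (isOpen_iInter_of_finite fun i => isOpen_iInter_of_finite fun j =>
      isOpen_iInter_of_finite fun _ => isOpen_lt (continuous_apply j) (continuous_apply i))
    (isOpen_iInter_of_finite fun i => isOpen_lt continuous_const (continuous_apply i))

theorem InChamberB.sq_sub_sq_pos {N : ℕ} {y : Fin N → ℝ} (hy : InChamberB N y) {i j : Fin N}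
    (hij : i < j) : 0 < y i ^ 2 - y j ^ 2 := by
  have := hy.1 hij
  have := hy.2 j
  nlinarith

theorem InChamberB.sq {N : ℕ} {y : Fin N → ℝ} (hy : InChamberB N y) : InChamberB N (y ^ 2) :=
  ⟨fun _ _ hij => sub_pos.mp (hy.sq_sub_sq_pos hij), fun i => pow_pos (hy.2 i) 2⟩

theorem InChamberB.sqrt {N : ℕ} {x : Fin N → ℝ} (hx : InChamberB N x) :
    InChamberB N (fun i => √(x i)) :=
  ⟨fun _ _ hij => Real.sqrt_lt_sqrt (hx.2 _).le (hx.1 hij), fun i => Real.sqrt_pos.mpr (hx.2 i)⟩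

/-- `W_B` in the coordinates `x_i = y_i ^ 2`, in which it is concave. -/
noncomputable def WBSq (N : ℕ) (ν : ℝ) (x : Fin N → ℝ) : ℝ :=
  2 * ∑ i, ∑ j ∈ univ.filter (i < ·), Real.log (x i - x j) + ν * ∑ i, Real.log (x i)
    - (∑ i, x i) / 2

noncomputable def WBSqGrad (N : ℕ) (ν : ℝ) (x : Fin N → ℝ) (i : Fin N) : ℝ :=
  2 * ∑ j ∈ univ.erase i, 1 / (x i - x j) + ν / x i - 1 / 2

theorem WB_eq_WBSq_sq (N : ℕ) (ν : ℝ) (y : Fin N → ℝ) : WB N ν y = WBSq N ν (y ^ 2) := by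
  simp only [WB, WBSq, Pi.pow_apply, Real.log_pow, ← mul_sum]
  push_cast
  ring

theorem sum_mul_WBSqGrad (N : ℕ) (ν : ℝ) (x a : Fin N → ℝ) :
    ∑ i, a i * WBSqGrad N ν x i =
      2 * ∑ i, ∑ j ∈ univ.filter (i < ·), (a i - a j) / (x i - x j) + ν * ∑ i, a i / x i
        - (∑ i, a i) / 2 := by
  have hpair := sum_sum_lt_sub_mul a (fun i j => 1 / (x i - x j))
    fun i j _ => by rw [← neg_sub, div_neg]
  simp only [div_eq_mul_one_div (a _ - a _), hpair, WBSqGrad, mul_sum, sum_div,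
    ← sum_add_distrib, ← sum_sub_distrib]
  refine sum_congr rfl fun i _ => ?_
  simp only [← mul_sum]
  ring

theorem WBSq_le_add_sum_mul_WBSqGrad {N : ℕ} {ν : ℝ} (hν : 0 ≤ ν) {x x₀ : Fin N → ℝ}
    (hx : InChamberB N x) (hx₀ : InChamberB N x₀) :
    WBSq N ν x ≤ WBSq N ν x₀ + ∑ i, (x i - x₀ i) * WBSqGrad N ν x₀ i := by
  have hpair : ∀ i j, i < j → Real.log (x i - x j) ≤
      Real.log (x₀ i - x₀ j) + ((x i - x₀ i) - (x j - x₀ j)) / (x₀ i - x₀ j) := fun i j hij => by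
    convert Real.log_le_log_add_sub_div (sub_pos.mpr (hx.1 hij)) (sub_pos.mpr (hx₀.1 hij))
      using 3
    ring
  have h₁ := sum_le_sum fun i (_ : i ∈ univ) => sum_le_sum fun j (hj : j ∈ univ.filter (i < ·)) =>
    hpair i j (mem_filter.mp hj).2
  have h₂ := mul_le_mul_of_nonneg_left (sum_le_sum fun i (_ : i ∈ univ) =>
    Real.log_le_log_add_sub_div (hx.2 i) (hx₀.2 i)) hν
  rw [sum_mul_WBSqGrad]
  simp only [WBSq, sum_add_distrib, sum_sub_distrib] at h₁ h₂ ⊢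
  linarith

theorem hasDerivAt_WBSq_update {N : ℕ} {ν : ℝ} {x : Fin N → ℝ} (hx : InChamberB N x) (i : Fin N) :
    HasDerivAt (fun t => WBSq N ν (Function.update x i t)) (WBSqGrad N ν x i) (x i) := by
  have hu : ∀ j,
      HasDerivAt (fun t => Function.update x i t j) ((Pi.single i 1 : Fin N → ℝ) j) (x i) :=
    hasDerivAt_pi.mp (hasDerivAt_update x i (x i))
  have hsum : WBSqGrad N ν x i = ∑ j, (Pi.single i 1 : Fin N → ℝ) j * WBSqGrad N ν x j := by
    simp [Pi.single_apply]
  rw [hsum, sum_mul_WBSqGrad]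
  simp only [WBSq]
  refine (((HasDerivAt.fun_sum fun j _ => HasDerivAt.fun_sum fun k hk => ?_).const_mul 2).add
    ((HasDerivAt.fun_sum fun j _ => ?_).const_mul ν)).sub
    ((HasDerivAt.fun_sum fun j _ => hu j).div_const 2)
  · have hjk : x j - x k ≠ 0 := (sub_pos.mpr (hx.1 (mem_filter.mp hk).2)).ne'
    simpa only [Function.update_eq_self] using
      ((hu j).fun_sub (hu k)).log (by simpa only [Function.update_eq_self] using hjk)
  · simpa only [Function.update_eq_self] using
      (hu j).log (by simpa only [Function.update_eq_self] using (hx.2 j).ne')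

theorem isMaxOn_WBSq_iff {N : ℕ} {ν : ℝ} (hν : 0 ≤ ν) {x₀ : Fin N → ℝ} (hx₀ : InChamberB N x₀) :
    IsMaxOn (WBSq N ν) {x | InChamberB N x} x₀ ↔ ∀ i, WBSqGrad N ν x₀ i = 0 := by
  constructor
  · intro hmax i
    have hloc : IsLocalMax (WBSq N ν) (Function.update x₀ i (x₀ i)) := by
      rw [Function.update_eq_self]
      exact hmax.isLocalMax ((isOpen_setOf_inChamberB N).mem_nhds hx₀)
    exact (hloc.comp_continuous (continuous_const.update i continuous_id).continuousAt)
      |>.hasDerivAt_eq_zero (hasDerivAt_WBSq_update hx₀ i)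
  · intro hgrad
    refine isMaxOn_iff.mpr fun x hx => ?_
    calc WBSq N ν x ≤ WBSq N ν x₀ + ∑ i, (x i - x₀ i) * WBSqGrad N ν x₀ i :=
          WBSq_le_add_sum_mul_WBSqGrad hν hx hx₀
      _ = WBSq N ν x₀ := by simp [hgrad]

theorem isMaxOn_WB_iff_isMaxOn_WBSq {N : ℕ} {ν : ℝ} {r : Fin N → ℝ} :
    IsMaxOn (WB N ν) {y | InChamberB N y} r ↔ IsMaxOn (WBSq N ν) {x | InChamberB N x} (r ^ 2) := by
  simp only [isMaxOn_iff, WB_eq_WBSq_sq]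
  refine ⟨fun h x hx => ?_, fun h y hy => h _ hy.sq⟩
  convert h _ hx.sqrt
  ext i
  exact (Real.sq_sqrt (hx.2 i).le).symm

theorem mul_WBSqGrad_sq {N : ℕ} {ν : ℝ} {r : Fin N → ℝ} (hr : InChamberB N r) (i : Fin N) :
    r i * WBSqGrad N ν (r ^ 2) i =
      ∑ j ∈ univ.erase i, (1 / (r i - r j) + 1 / (r i + r j)) + ν / r i - r i / 2 := by
  have hterm : ∀ j ∈ univ.erase i,
      r i * (2 * (1 / (r i ^ 2 - r j ^ 2))) = 1 / (r i - r j) + 1 / (r i + r j) := fun j hj => by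
    have hsub : r i - r j ≠ 0 := sub_ne_zero.mpr (hr.1.injective.ne (ne_of_mem_erase hj).symm)
    have hadd : r i + r j ≠ 0 := (add_pos (hr.2 i) (hr.2 j)).ne'
    rw [show r i ^ 2 - r j ^ 2 = (r i - r j) * (r i + r j) by ring]
    field_simp
    ring
  simp only [WBSqGrad, Pi.pow_apply, mul_sub, mul_add, mul_sum, sum_congr rfl hterm]
  field_simp [(hr.2 i).ne']

theorem stmt_6 (N : ℕ) (ν : ℝ) (hν : 0 < ν) (r : Fin N → ℝ) (hr : InChamberB N r) :
    (∀ y : Fin N → ℝ, InChamberB N y → WB N ν y ≤ WB N ν r) ↔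
      (∀ i, r i / 2 =
        (∑ j ∈ Finset.univ.erase i, (1 / (r i - r j) + 1 / (r i + r j))) + ν / r i) := by
  refine (isMaxOn_iff (s := {y | InChamberB N y})).symm.trans ?_
  rw [isMaxOn_WB_iff_isMaxOn_WBSq, isMaxOn_WBSq_iff hν.le hr.sq]
  refine forall_congr' fun i => ?_
  rw [eq_comm (a := r i / 2), ← sub_eq_zero (a := _ + ν / r i), ← mul_WBSqGrad_sq hr,
    mul_eq_zero, or_iff_right (hr.2 i).ne']
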